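/- Let (q_n) be defined by q_n(x) = (1/2) q_{n-1}(x/(1-x)) for 0 ≤ x ≤ 1/2 and q_n(x) = 1 − (1/2) q_{n-1}((1-x)/x) for 1/2 < x ≤ 1, starting from any probability distribution function q_0 on [0,1] with q_0(0)=0, q_0(1)=1. Then sup_{x∈[0,1]} |q_n(x) − q(x)| ≤ 2^{-n} sup_{x∈[0,1]} |q_0(x) − q(x)|, so q_n converges uniformly to Minkowski's question mark function q. -/

import Mathlib

/-- The self-similarity operator for Minkowski's question mark function. -/
noncomputable def minkT (f : ℝ → ℝ) : ℝ → ℝ := fun x =>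
  if x ≤ 1/2 then (1/2) * f (x / (1 - x)) else 1 - (1/2) * f ((1 - x) / x)

/-- Minkowski's question mark function, obtained as the (uniform) limit of the
iteration of `minkT` starting from the identity distribution function. -/
noncomputable def minkQ : ℝ → ℝ := fun x =>
  Filter.limUnder Filter.atTop (fun n => (minkT^[n] id) x)

/-!
`minkT` halves sup-distances on `[0, 1]`: each branch evaluates its argument at a point of
`[0, 1]` and scales by `1/2`. Hence the iterates of `minkT` from `id` are pointwise Cauchy,
their limit `minkQ` is a fixed point of `minkT` on `[0, 1]` (since `minkT` commutes with
pointwise limits), and comparing `minkT^[n] q0` with `minkT^[n] minkQ = minkQ` gives the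
geometric bound. Monotonicity of `q0` is what makes the supremum finite.
-/

open Set Filter Topology

lemma div_one_sub_mem_Icc {x : ℝ} (h0 : 0 ≤ x) (h : x ≤ 1 / 2) :
    x / (1 - x) ∈ Icc (0 : ℝ) 1 :=
  ⟨div_nonneg h0 (by linarith), (div_le_one (by linarith)).2 (by linarith)⟩

lemma one_sub_div_mem_Icc {x : ℝ} (h : 1 / 2 < x) (h1 : x ≤ 1) :
    (1 - x) / x ∈ Icc (0 : ℝ) 1 :=
  ⟨div_nonneg (by linarith) (by linarith), (div_le_one (by linarith)).2 (by linarith)⟩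

lemma minkT_mapsTo {f : ℝ → ℝ} (hf : MapsTo f (Icc 0 1) (Icc 0 1)) :
    MapsTo (minkT f) (Icc 0 1) (Icc 0 1) := by
  rintro x ⟨hx0, hx1⟩
  by_cases hc : x ≤ 1 / 2
  · obtain ⟨h0, h1⟩ := hf (div_one_sub_mem_Icc hx0 hc)
    simp only [minkT, if_pos hc]
    constructor <;> linarith
  · obtain ⟨h0, h1⟩ := hf (one_sub_div_mem_Icc (not_le.1 hc) hx1)
    simp only [minkT, if_neg hc]
    constructor <;> linarith

lemma minkT_eqOn {f g : ℝ → ℝ} (h : EqOn f g (Icc 0 1)) :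
    EqOn (minkT f) (minkT g) (Icc 0 1) := by
  rintro x ⟨hx0, hx1⟩
  by_cases hc : x ≤ 1 / 2
  · simp only [minkT, if_pos hc, h (div_one_sub_mem_Icc hx0 hc)]
  · simp only [minkT, if_neg hc, h (one_sub_div_mem_Icc (not_le.1 hc) hx1)]

lemma abs_minkT_sub_minkT_le {f g : ℝ → ℝ} {D : ℝ}
    (h : ∀ y ∈ Icc (0 : ℝ) 1, |f y - g y| ≤ D) {x : ℝ} (hx : x ∈ Icc (0 : ℝ) 1) :
    |minkT f x - minkT g x| ≤ D / 2 := by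
  obtain ⟨hx0, hx1⟩ := hx
  by_cases hc : x ≤ 1 / 2
  · have hy := abs_le.1 (h _ (div_one_sub_mem_Icc hx0 hc))
    simp only [minkT, if_pos hc]
    exact abs_le.2 ⟨by linarith, by linarith⟩
  · have hy := abs_le.1 (h _ (one_sub_div_mem_Icc (not_le.1 hc) hx1))
    simp only [minkT, if_neg hc]
    exact abs_le.2 ⟨by linarith, by linarith⟩

lemma abs_iterate_minkT_sub_le {f g : ℝ → ℝ} {D : ℝ}
    (h : ∀ y ∈ Icc (0 : ℝ) 1, |f y - g y| ≤ D) (n : ℕ) :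
    ∀ x ∈ Icc (0 : ℝ) 1, |minkT^[n] f x - minkT^[n] g x| ≤ (1 / 2) ^ n * D := by
  induction n with
  | zero => simpa using h
  | succ n ih =>
    intro x hx
    simp only [Function.iterate_succ_apply']
    exact (abs_minkT_sub_minkT_le ih hx).trans_eq (by ring)

lemma iterate_minkT_eqOn_self {g : ℝ → ℝ} (hg : EqOn (minkT g) g (Icc 0 1)) (n : ℕ) :
    EqOn (minkT^[n] g) g (Icc 0 1) := by
  induction n with
  | zero => exact eqOn_refl _ _
  | succ n ih =>
    intro x hx
    rw [Function.iterate_succ_apply']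
    exact (minkT_eqOn ih hx).trans (hg hx)

lemma tendsto_minkT {ι : Type*} {l : Filter ι} {F : ι → ℝ → ℝ} {f : ℝ → ℝ}
    (h : ∀ y ∈ Icc (0 : ℝ) 1, Tendsto (fun i => F i y) l (𝓝 (f y)))
    {x : ℝ} (hx : x ∈ Icc (0 : ℝ) 1) :
    Tendsto (fun i => minkT (F i) x) l (𝓝 (minkT f x)) := by
  obtain ⟨hx0, hx1⟩ := hx
  by_cases hc : x ≤ 1 / 2
  · simp only [minkT, if_pos hc]
    exact (h _ (div_one_sub_mem_Icc hx0 hc)).const_mul _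
  · simp only [minkT, if_neg hc]
    exact ((h _ (one_sub_div_mem_Icc (not_le.1 hc) hx1)).const_mul _).const_sub _

lemma iterate_minkT_id_mapsTo (n : ℕ) : MapsTo (minkT^[n] id) (Icc 0 1) (Icc 0 1) :=
  Function.Iterate.rec (fun f => MapsTo f (Icc 0 1) (Icc 0 1)) (mapsTo_id _)
    (fun _ => minkT_mapsTo) n

lemma cauchySeq_iterate_minkT_id {x : ℝ} (hx : x ∈ Icc (0 : ℝ) 1) :
    CauchySeq fun n => minkT^[n] id x := by
  refine cauchySeq_of_le_geometric (1 / 2) 1 (by norm_num) fun n => ?_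
  have h : ∀ y ∈ Icc (0 : ℝ) 1, |id y - minkT id y| ≤ 1 := fun y hy =>
    Real.dist_le_of_mem_Icc_01 hy (minkT_mapsTo (mapsTo_id _) hy)
  rw [Real.dist_eq, Function.iterate_succ_apply, one_mul]
  simpa using abs_iterate_minkT_sub_le h n x hx

lemma tendsto_iterate_minkT_id {x : ℝ} (hx : x ∈ Icc (0 : ℝ) 1) :
    Tendsto (fun n => minkT^[n] id x) atTop (𝓝 (minkQ x)) :=
  (cauchySeq_iterate_minkT_id hx).tendsto_limUnder

lemma minkQ_mapsTo : MapsTo minkQ (Icc 0 1) (Icc 0 1) := fun _ hx =>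
  isClosed_Icc.mem_of_tendsto (tendsto_iterate_minkT_id hx)
    (Eventually.of_forall fun n => iterate_minkT_id_mapsTo n hx)

lemma minkT_minkQ : EqOn (minkT minkQ) minkQ (Icc 0 1) := fun x hx => by
  refine tendsto_nhds_unique (tendsto_minkT (fun y hy => tendsto_iterate_minkT_id hy) hx) ?_
  simpa only [Function.comp_def, Function.iterate_succ_apply'] using
    (tendsto_iterate_minkT_id hx).comp (tendsto_add_atTop_nat 1)

lemma bddAbove_abs_sub_minkQ {q0 : ℝ → ℝ} (hmono : MonotoneOn q0 (Icc 0 1)) :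
    BddAbove (range fun y : Icc (0 : ℝ) 1 => |q0 y - minkQ y|) := by
  refine ⟨max |q0 0| |q0 1| + 1, ?_⟩
  rintro _ ⟨⟨y, hy⟩, rfl⟩
  have hq : |q0 y| ≤ max |q0 0| |q0 1| := abs_le_max_abs_abs
    (hmono (left_mem_Icc.2 zero_le_one) hy hy.1) (hmono hy (right_mem_Icc.2 zero_le_one) hy.2)
  have hQ : |minkQ y| ≤ 1 := abs_le.2 ⟨by linarith [(minkQ_mapsTo hy).1], (minkQ_mapsTo hy).2⟩
  exact (abs_sub _ _).trans (add_le_add hq hQ)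

lemma tendstoUniformlyOn_of_abs_sub_le {α ι : Type*} {l : Filter ι} {F : ι → α → ℝ}
    {f : α → ℝ} {s : Set α} {b : ι → ℝ} (hb : Tendsto b l (𝓝 0))
    (h : ∀ i, ∀ x ∈ s, |F i x - f x| ≤ b i) : TendstoUniformlyOn F f l s := by
  rw [Metric.tendstoUniformlyOn_iff]
  intro ε hε
  filter_upwards [hb.eventually (gt_mem_nhds hε)] with i hi x hx
  rw [dist_comm, Real.dist_eq]
  exact (h i x hx).trans_lt hi

theorem minkT_iterate_tendsto_minkQ_general
    (q0 : ℝ → ℝ) (hmono : MonotoneOn q0 (Set.Icc (0:ℝ) 1)) :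
    (∀ n : ℕ, ∀ x ∈ Set.Icc (0:ℝ) 1,
      |(minkT^[n] q0) x - minkQ x|
        ≤ (1 / 2) ^ n * ⨆ y : Set.Icc (0:ℝ) 1, |q0 y - minkQ y|) ∧
    TendstoUniformlyOn (fun n x => (minkT^[n] q0) x) minkQ Filter.atTop
      (Set.Icc (0:ℝ) 1) := by
  set S := ⨆ y : Icc (0 : ℝ) 1, |q0 y - minkQ y|
  have hS : ∀ y ∈ Icc (0 : ℝ) 1, |q0 y - minkQ y| ≤ S := fun y hy =>
    le_ciSup (bddAbove_abs_sub_minkQ hmono) ⟨y, hy⟩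
  have hbound : ∀ n : ℕ, ∀ x ∈ Icc (0 : ℝ) 1, |minkT^[n] q0 x - minkQ x| ≤ (1 / 2) ^ n * S :=
    fun n x hx => by
      rw [← iterate_minkT_eqOn_self minkT_minkQ n hx]
      exact abs_iterate_minkT_sub_le hS n x hx
  refine ⟨hbound, tendstoUniformlyOn_of_abs_sub_le ?_ hbound⟩
  simpa using (tendsto_pow_atTop_nhds_zero_of_lt_one (by norm_num)
    (by norm_num : (1 / 2 : ℝ) < 1)).mul_const S

theorem minkT_iterate_tendsto_minkQ
    (q0 : ℝ → ℝ) (hmono : MonotoneOn q0 (Set.Icc (0:ℝ) 1))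
    (h0 : q0 0 = 0) (h1 : q0 1 = 1) :
    (∀ n : ℕ, ∀ x ∈ Set.Icc (0:ℝ) 1,
      |(minkT^[n] q0) x - minkQ x|
        ≤ (1 / 2) ^ n * ⨆ y : Set.Icc (0:ℝ) 1, |q0 y - minkQ y|) ∧
    TendstoUniformlyOn (fun n x => (minkT^[n] q0) x) minkQ Filter.atTop
      (Set.Icc (0:ℝ) 1) :=
  minkT_iterate_tendsto_minkQ_general q0 hmono
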